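/- Suppose Y ⊆ ℕ, (ψ, E) is a Y-computable presentation of a total combinatory algebra, and f : ℕ → ℕ is a weak embedding of Kleene's first model K₁ into (ψ, E). Then for every pair of disjoint computably enumerable sets A, B ⊆ ℕ there exists a set C ⊆ ℕ whose characteristic function is recursive in Y such that A ⊆ C and B ∩ C = ∅. -/

import Mathlib

/-!
The weak embedding `f` lets the presentation compute with natural numbers up to `E`: with
`s` a code of the successor, the internal numerals `(ψ (f s))^[n] (f 0)` are computable in `Y`
and `E`-equivalent to `f n`. Choose a code `e` of a partial computable function that is `0` on
`A` and `1` on `B`. The set of `n` for which `ψ (f e)` applied to the `n`-th numeral is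
`E`-equivalent to `f 0` is then decidable in `Y`, contains `A`, and misses `B`, since `f 0` and
`f 1` are not `E`-equivalent.
-/

/-- Partial recursive functions relative to an oracle `O : ℕ →. ℕ`
(relativization of Mathlib's `Nat.Partrec`). -/
inductive RecursiveIn₁ (O : ℕ →. ℕ) : (ℕ →. ℕ) → Prop
  | zero : RecursiveIn₁ O (pure 0)
  | succ : RecursiveIn₁ O ↑Nat.succ
  | left : RecursiveIn₁ O ↑fun n : ℕ => n.unpair.1
  | right : RecursiveIn₁ O ↑fun n : ℕ => n.unpair.2
  | oracle : RecursiveIn₁ O O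
  | pair {f g} : RecursiveIn₁ O f → RecursiveIn₁ O g →
      RecursiveIn₁ O fun n => Nat.pair <$> f n <*> g n
  | comp {f g} : RecursiveIn₁ O f → RecursiveIn₁ O g →
      RecursiveIn₁ O fun n => g n >>= f
  | prec {f g} : RecursiveIn₁ O f → RecursiveIn₁ O g →
      RecursiveIn₁ O (Nat.unpaired fun a n =>
        n.rec (f a) fun y IH => do let i ← IH; g (Nat.pair a (Nat.pair y i)))
  | rfind {f} : RecursiveIn₁ O f →
      RecursiveIn₁ O fun a => Nat.rfind fun n => (fun m => m = 0) <$> f (Nat.pair a n)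

open scoped Classical in
/-- The characteristic function of a set `Y ⊆ ℕ`, as a partial function. -/
noncomputable def chi (Y : Set ℕ) : ℕ →. ℕ :=
  fun n => Part.some (if n ∈ Y then 1 else 0)

/-- The `e`-th partial computable function on `ℕ`. -/
def phi (e : ℕ) : ℕ →. ℕ :=
  Nat.Partrec.Code.eval (Denumerable.ofNat Nat.Partrec.Code e)

/-- `(ψ, E)` is a `Y`-computable presentation of a total combinatory algebra:
`ψ` is total and recursive in `Y`, `E` is an equivalence relation decidable in `Y`
which is a congruence for `ψ`, and there are combinators `k`, `s`. -/
structure YPresentation (Y : Set ℕ) (ψ : ℕ → ℕ → ℕ) (E : ℕ → ℕ → Prop) : Prop where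
  psi_rec : RecursiveIn₁ (chi Y) (fun n : ℕ => Part.some (ψ n.unpair.1 n.unpair.2))
  equiv : Equivalence E
  E_rec : RecursiveIn₁ (chi Y) (chi {n : ℕ | E n.unpair.1 n.unpair.2})
  congruence : ∀ {n n' m m'}, E n n' → E m m' → E (ψ n m) (ψ n' m')
  comb : ∃ k s : ℕ, ∀ a b c : ℕ,
    E (ψ (ψ k a) b) a ∧ E (ψ (ψ (ψ s a) b) c) (ψ (ψ a c) (ψ b c))

/-- `f` is a weak embedding of Kleene's first model `K₁` into `(ψ, E)`. -/
def WeakEmb (ψ : ℕ → ℕ → ℕ) (E : ℕ → ℕ → Prop) (f : ℕ → ℕ) : Prop :=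
  (∀ n m, E (f n) (f m) → n = m) ∧
  ∀ a b c : ℕ, phi a b = Part.some c → E (ψ (f a) (f b)) (f c)

namespace RecursiveIn₁

variable {O : ℕ →. ℕ}

theorem of_eq {g g' : ℕ →. ℕ} (hg : RecursiveIn₁ O g) (H : ∀ n, g n = g' n) :
    RecursiveIn₁ O g' :=
  funext H ▸ hg

theorem of_partrec {g : ℕ →. ℕ} (h : Nat.Partrec g) : RecursiveIn₁ O g := by
  induction h with
  | zero => exact .zero
  | succ => exact .succ
  | left => exact .left
  | right => exact .right
  | pair _ _ ihf ihg => exact .pair ihf ihg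
  | comp _ _ ihf ihg => exact .comp ihf ihg
  | prec _ _ ihf ihg => exact .prec ihf ihg
  | rfind _ ihf => exact .rfind ihf

theorem of_primrec {g : ℕ → ℕ} (h : Primrec g) :
    RecursiveIn₁ O (fun n => Part.some (g n)) :=
  of_partrec (Nat.Partrec.of_primrec (Primrec.nat_iff.1 h))

theorem const (c : ℕ) : RecursiveIn₁ O (fun _ => Part.some c) :=
  of_primrec (Primrec.const c)

theorem comp_total {F : ℕ →. ℕ} {g : ℕ → ℕ} (hF : RecursiveIn₁ O F)
    (hg : RecursiveIn₁ O (fun n => Part.some (g n))) : RecursiveIn₁ O (fun n => F (g n)) :=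
  (hF.comp hg).of_eq fun n => Part.bind_some (g n) F

theorem pair_total {g h : ℕ → ℕ} (hg : RecursiveIn₁ O (fun n => Part.some (g n)))
    (hh : RecursiveIn₁ O (fun n => Part.some (h n))) :
    RecursiveIn₁ O (fun n => Part.some (Nat.pair (g n) (h n))) :=
  (hg.pair hh).of_eq fun n => by simp [seq_eq_bind_map]

theorem uncurry_comp {ψ : ℕ → ℕ → ℕ} {g h : ℕ → ℕ}
    (hψ : RecursiveIn₁ O (fun n => Part.some (ψ n.unpair.1 n.unpair.2)))
    (hg : RecursiveIn₁ O (fun n => Part.some (g n)))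
    (hh : RecursiveIn₁ O (fun n => Part.some (h n))) :
    RecursiveIn₁ O (fun n => Part.some (ψ (g n) (h n))) :=
  (hψ.comp_total (pair_total hg hh)).of_eq fun n => by simp

theorem chi_setOf_comp {R : ℕ → ℕ → Prop} {g h : ℕ → ℕ}
    (hR : RecursiveIn₁ O (chi {m | R m.unpair.1 m.unpair.2}))
    (hg : RecursiveIn₁ O (fun n => Part.some (g n)))
    (hh : RecursiveIn₁ O (fun n => Part.some (h n))) :
    RecursiveIn₁ O (chi {n | R (g n) (h n)}) :=
  (hR.comp_total (pair_total hg hh)).of_eq fun n => by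
    -- `simp` cannot rewrite the condition under the classical `Decidable` instance of `chi`
    simp only [chi]
    congr 2
    simp

theorem iterate {g : ℕ → ℕ} (hg : RecursiveIn₁ O (fun n => Part.some (g n))) (x : ℕ) :
    RecursiveIn₁ O (fun n => Part.some (g^[n] x)) := by
  -- `prec` hands the step function the triple `⟨a, y, g^[y] x⟩`
  have hstep : RecursiveIn₁ O (fun m => Part.some (g m.unpair.2.unpair.2)) :=
    hg.comp_total (of_primrec ((Primrec.snd.comp Primrec.unpair).comp
      (Primrec.snd.comp Primrec.unpair)))
  refine ((RecursiveIn₁.prec (const x) hstep).comp_total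
    (of_primrec (Primrec₂.natPair.comp (Primrec.const 0) Primrec.id))).of_eq fun n => ?_
  induction n with
  | zero => simp [Nat.unpaired]
  | succ n ih =>
    simp only [Nat.unpaired, Nat.unpair_pair, id] at ih ⊢
    rw [ih]
    simp [Function.iterate_succ_apply']

end RecursiveIn₁

theorem phi_encode_succ (n : ℕ) :
    phi (Encodable.encode Nat.Partrec.Code.succ) n = Part.some (n + 1) := by
  rw [phi, Denumerable.ofNat_encode]
  rfl

theorem exists_phi_separating {A B : Set ℕ} (hA : REPred (· ∈ A)) (hB : REPred (· ∈ B))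
    (hAB : Disjoint A B) :
    ∃ e, (∀ n ∈ A, phi e n = Part.some 0) ∧ (∀ n ∈ B, phi e n = Part.some 1) := by
  obtain ⟨k, hk, hmem⟩ := Partrec.merge (hA.map (Computable.const 0).to₂)
    (hB.map (Computable.const 1).to₂) fun n x hx y hy => by
      simp only [Part.mem_map_iff, Part.mem_assert_iff] at hx hy
      exact absurd hAB (Set.not_disjoint_iff.2 ⟨n, hx.choose_spec.1.1, hy.choose_spec.1.1⟩)
  obtain ⟨c, hc⟩ := Nat.Partrec.Code.exists_code.1 (Partrec.nat_iff.1 hk)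
  refine ⟨Encodable.encode c, fun n hn => ?_, fun n hn => ?_⟩ <;>
    rw [phi, Denumerable.ofNat_encode, hc, Part.eq_some_iff, hmem] <;>
    simp [hn]

def kleeneNumeral (ψ : ℕ → ℕ → ℕ) (f : ℕ → ℕ) (n : ℕ) : ℕ :=
  (ψ (f (Encodable.encode Nat.Partrec.Code.succ)))^[n] (f 0)

theorem RecursiveIn₁.kleeneNumeral {O : ℕ →. ℕ} {ψ : ℕ → ℕ → ℕ} (f : ℕ → ℕ)
    (hψ : RecursiveIn₁ O (fun n => Part.some (ψ n.unpair.1 n.unpair.2))) :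
    RecursiveIn₁ O (fun n => Part.some (kleeneNumeral ψ f n)) :=
  iterate (hψ.uncurry_comp (const _) (of_primrec Primrec.id)) _

section WeakEmb

variable {ψ : ℕ → ℕ → ℕ} {E : ℕ → ℕ → Prop} {f : ℕ → ℕ}

theorem WeakEmb.rel_kleeneNumeral (hf : WeakEmb ψ E f) (hE : Equivalence E)
    (hcong : ∀ {n n' m m'}, E n n' → E m m' → E (ψ n m) (ψ n' m')) (n : ℕ) :
    E (kleeneNumeral ψ f n) (f n) := by
  induction n with
  | zero => exact hE.refl _
  | succ n ih =>
    rw [kleeneNumeral, Function.iterate_succ_apply']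
    exact hE.trans (hcong (hE.refl _) ih) (hf.2 _ n (n + 1) (phi_encode_succ n))

theorem WeakEmb.rel_apply_kleeneNumeral (hf : WeakEmb ψ E f) (hE : Equivalence E)
    (hcong : ∀ {n n' m m'}, E n n' → E m m' → E (ψ n m) (ψ n' m')) {e n c : ℕ}
    (h : phi e n = Part.some c) :
    E (ψ (f e) (kleeneNumeral ψ f n)) (f c) :=
  hE.trans (hcong (hE.refl _) (hf.rel_kleeneNumeral hE hcong n)) (hf.2 e n c h)

end WeakEmb

/-- If a total combinatory algebra has a `Y`-computable presentation `(ψ, E)`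
and `K₁` weakly embeds into it, then every pair of disjoint c.e. sets is
separated by a set whose characteristic function is recursive in `Y`. -/
theorem completion_separates (Y : Set ℕ) (ψ : ℕ → ℕ → ℕ) (E : ℕ → ℕ → Prop)
    (hP : YPresentation Y ψ E) (f : ℕ → ℕ) (hf : WeakEmb ψ E f) :
    ∀ A B : Set ℕ, REPred (· ∈ A) → REPred (· ∈ B) → A ∩ B = ∅ →
      ∃ C : Set ℕ, RecursiveIn₁ (chi Y) (chi C) ∧ A ⊆ C ∧ B ∩ C = ∅ := by
  intro A B hA hB hAB
  obtain ⟨e, heA, heB⟩ := exists_phi_separating hA hB (Set.disjoint_iff_inter_eq_empty.2 hAB)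
  have happly {n c : ℕ} (h : phi e n = Part.some c) :=
    hf.rel_apply_kleeneNumeral hP.equiv hP.congruence h
  refine ⟨{n | E (ψ (f e) (kleeneNumeral ψ f n)) (f 0)}, ?_,
    fun n hn => happly (heA n hn), ?_⟩
  · exact hP.E_rec.chi_setOf_comp
      (hP.psi_rec.uncurry_comp (.const _) (.kleeneNumeral f hP.psi_rec)) (.const _)
  · refine Set.eq_empty_of_forall_notMem fun n ⟨hnB, hnC⟩ => ?_
    have h01 : E (f 0) (f 1) := hP.equiv.trans (hP.equiv.symm hnC) (happly (heB n hnB))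
    exact zero_ne_one (hf.1 0 1 h01)
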